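/- Soundness of G: every sequent provable in the sequent calculus G is valid; that is, if Γ ⊢_G Δ then for every hybrid data model M, if M ⊩ γ for all γ ∈ Γ then M ⊩ δ for some δ ∈ Δ. -/

import Mathlib

namespace HXPathD

mutual
  inductive Path (P N M C : Type) : Type where
    | mod  : M → Path P N M C
    | nom  : N → Path P N M C
    | test : Node P N M C → Path P N M C
    | comp : Path P N M C → Path P N M C → Path P N M C

  inductive Node (P N M C : Type) : Type where
    | prop : P → Node P N M C
    | nom  : N → Node P N M C
    | bot  : Node P N M C
    | impl : Node P N M C → Node P N M C → Node P N M C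
    | at   : N → Node P N M C → Node P N M C
    | dia  : M → Node P N M C → Node P N M C
    | eq   : Path P N M C → C → Path P N M C → Node P N M C
    | neq  : Path P N M C → C → Path P N M C → Node P N M C
end

variable {P N M C : Type}

/-- Abbreviations. -/
def Node.neg (φ : Node P N M C) : Node P N M C := .impl φ .bot
def Node.top : Node P N M C := .impl .bot .bot
def Node.and (φ ψ : Node P N M C) : Node P N M C := .neg (.impl φ (.neg ψ))
def Node.iff (φ ψ : Node P N M C) : Node P N M C := .and (.impl φ ψ) (.impl ψ φ)
def Node.box (a : M) (φ : Node P N M C) : Node P N M C := .neg (.dia a (.neg φ))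
def Path.eps : Path P N M C := .test .top

/-- The node expression ⟨α⟩φ, obtained by the abbreviations
    ⟨j:⟩φ := @_jφ, ⟨ψ?⟩φ := ψ∧φ, ⟨αβ⟩φ := ⟨α⟩⟨β⟩φ (with ⟨a⟩φ primitive). -/
def Path.dia : Path P N M C → Node P N M C → Node P N M C
  | .mod a, φ => .dia a φ
  | .nom j, φ => .at j φ
  | .test ψ, φ => .and ψ φ
  | .comp α β, φ => α.dia (β.dia φ)

/-- A comparison ▲ ∈ {=_c, ≠_c : c ∈ Cmp}. -/
inductive Comparison (C : Type) : Type where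
  | ceq  : C → Comparison C
  | cneq : C → Comparison C

/-- The node expression ⟨α ▲ β⟩. -/
def Comparison.node : Comparison C → Path P N M C → Path P N M C → Node P N M C
  | .ceq c, α, β => .eq α c β
  | .cneq c, α, β => .neq α c β

/-- A hybrid data model. -/
structure Model (P N M C : Type) where
  W : Type
  nonempty : Nonempty W
  R : M → W → W → Prop
  E : C → W → W → Prop
  E_equiv : ∀ c, Equivalence (E c)
  g : N → W
  V : P → W → Prop

mutual
  def Model.satPath (𝔐 : Model P N M C) : Path P N M C → 𝔐.W → 𝔐.W → Prop
    | .mod a, n, n' => 𝔐.R a n n'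
    | .nom i, _, n' => 𝔐.g i = n'
    | .test φ, n, n' => n = n' ∧ 𝔐.sat φ n
    | .comp α β, n, n' => ∃ n'', 𝔐.satPath α n n'' ∧ 𝔐.satPath β n'' n'

  def Model.sat (𝔐 : Model P N M C) : Node P N M C → 𝔐.W → Prop
    | .prop p, n => 𝔐.V p n
    | .nom i, n => 𝔐.g i = n
    | .bot, _ => False
    | .impl φ ψ, n => 𝔐.sat φ n → 𝔐.sat ψ n
    | .at i φ, _ => 𝔐.sat φ (𝔐.g i)
    | .dia a φ, n => ∃ n', 𝔐.R a n n' ∧ 𝔐.sat φ n'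
    | .eq α c β, n => ∃ n' n'', 𝔐.satPath α n n' ∧ 𝔐.satPath β n n'' ∧ 𝔐.E c n' n''
    | .neq α c β, n => ∃ n' n'', 𝔐.satPath α n n' ∧ 𝔐.satPath β n n'' ∧ ¬ 𝔐.E c n' n''
end

mutual
  def Path.noms : Path P N M C → Set N
    | .mod _ => ∅
    | .nom i => {i}
    | .test φ => φ.noms
    | .comp α β => α.noms ∪ β.noms

  def Node.noms : Node P N M C → Set N
    | .prop _ => ∅
    | .nom i => {i}
    | .bot => ∅
    | .impl φ ψ => φ.noms ∪ ψ.noms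
    | .at i φ => insert i φ.noms
    | .dia _ φ => φ.noms
    | .eq α _ β => α.noms ∪ β.noms
    | .neq α _ β => α.noms ∪ β.noms
end

/-- Node expressions of the admissible forms for sequents:
    ⟨i: ▲ j:⟩ or @_iφ. -/
def Node.Admissible : Node P N M C → Prop
  | .at _ _ => True
  | .eq (.nom _) _ (.nom _) => True
  | .neq (.nom _) _ (.nom _) => True
  | _ => False

/-- A sequent: antecedent and consequent. -/
abbrev Sequent (P N M C : Type) := Set (Node P N M C) × Set (Node P N M C)

/-- The nominal `j` does not occur in the set `S`. -/
def FreshIn (j : N) (S : Set (Node P N M C)) : Prop := ∀ φ ∈ S, j ∉ φ.noms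

/-- Shape restriction on the axiom (Ax). -/
inductive AxForm : Node P N M C → Prop where
  | prop (i : N) (p : P) : AxForm (.at i (.prop p))
  | nom (i j : N) : AxForm (.at i (.nom j))
  | eq (i : N) (c : C) (j : N) : AxForm (.eq (.nom i) c (.nom j))

/-- Shape restriction on the rule (S1): φ is p, ⊥ or ⟨a⟩k. -/
inductive S1Form : Node P N M C → Prop where
  | prop (p : P) : S1Form (.prop p)
  | bot : S1Form .bot
  | dia (a : M) (k : N) : S1Form (.dia a (.nom k))

/-- One rule instance of the sequent calculus G: `Step cut prems concl` holds iff
    `concl` may be inferred from the premisses `prems` by a rule of G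
    (when `cut = false`, the rule (Cut) is excluded). -/
inductive Step (cut : Bool) : List (Sequent P N M C) → Sequent P N M C → Prop where
  | ax {Γ Δ : Set (Node P N M C)} {φ} (h : AxForm φ) :
      Step cut [] (insert φ Γ, insert φ Δ)
  | bot {Γ Δ : Set (Node P N M C)} (i : N) :
      Step cut [] (insert (.at i .bot) Γ, Δ)
  | implL {Γ Δ : Set (Node P N M C)} (i : N) (φ ψ : Node P N M C) :
      Step cut [(Γ, insert (.at i φ) Δ), (insert (.at i ψ) Γ, Δ)]
        (insert (.at i (.impl φ ψ)) Γ, Δ)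
  | implR {Γ Δ : Set (Node P N M C)} (i : N) (φ ψ : Node P N M C) :
      Step cut [(insert (.at i φ) Γ, insert (.at i ψ) Δ)]
        (Γ, insert (.at i (.impl φ ψ)) Δ)
  | atT {Γ Δ : Set (Node P N M C)} (i : N) :
      Step cut [(insert (.at i (.nom i)) Γ, Δ)] (Γ, Δ)
  | at5 {Γ Δ : Set (Node P N M C)} (i j k : N) :
      Step cut
        [(insert (.at j (.nom k)) (insert (.at i (.nom j)) (insert (.at i (.nom k)) Γ)), Δ)]
        (insert (.at i (.nom j)) (insert (.at i (.nom k)) Γ), Δ)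
  | nomRule {Γ Δ : Set (Node P N M C)} (i j : N)
      (hj : FreshIn j Γ) (hj' : FreshIn j Δ) :
      Step cut [(insert (.at i (.nom j)) Γ, Δ)] (Γ, Δ)
  | s1 {Γ Δ : Set (Node P N M C)} (i j : N) {φ : Node P N M C} (h : S1Form φ) :
      Step cut
        [(insert (.at j φ) (insert (.at i (.nom j)) (insert (.at i φ) Γ)), Δ)]
        (insert (.at i (.nom j)) (insert (.at i φ) Γ), Δ)
  | s2 {Γ Δ : Set (Node P N M C)} (i j k : N) (a : M) :
      Step cut
        [(insert (.at i (.dia a (.nom k)))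
            (insert (.at j (.nom k)) (insert (.at i (.dia a (.nom j))) Γ)), Δ)]
        (insert (.at j (.nom k)) (insert (.at i (.dia a (.nom j))) Γ), Δ)
  | s3 {Γ Δ : Set (Node P N M C)} (i j k : N) (c : C) :
      Step cut
        [(insert (.eq (.nom j) c (.nom k))
            (insert (.at i (.nom j)) (insert (.eq (.nom i) c (.nom k)) Γ)), Δ)]
        (insert (.at i (.nom j)) (insert (.eq (.nom i) c (.nom k)) Γ), Δ)
  | atL {Γ Δ : Set (Node P N M C)} (i j : N) (φ : Node P N M C) :
      Step cut [(insert (.at i φ) Γ, Δ)] (insert (.at j (.at i φ)) Γ, Δ)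
  | atR {Γ Δ : Set (Node P N M C)} (i j : N) (φ : Node P N M C) :
      Step cut [(Γ, insert (.at i φ) Δ)] (Γ, insert (.at j (.at i φ)) Δ)
  | diaL {Γ Δ : Set (Node P N M C)} (i j : N) (a : M) (φ : Node P N M C)
      (hj : FreshIn j (insert (.at i (.dia a φ)) Γ)) (hj' : FreshIn j Δ) :
      Step cut
        [(insert (.at i (.dia a (.nom j))) (insert (.at j φ) Γ), Δ)]
        (insert (.at i (.dia a φ)) Γ, Δ)
  | diaR {Γ Δ : Set (Node P N M C)} (i j : N) (a : M) (φ : Node P N M C) :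
      Step cut
        [(insert (.at i (.dia a (.nom j))) Γ,
          insert (.at i (.dia a φ)) (insert (.at j φ) Δ))]
        (insert (.at i (.dia a (.nom j))) Γ, insert (.at i (.dia a φ)) Δ)
  | cmpL {Γ Δ : Set (Node P N M C)} (i j k : N) (α β : Path P N M C)
      (b : Comparison C) (hjk : j ≠ k)
      (hj : FreshIn j (insert (.at i (b.node α β)) Γ)) (hj' : FreshIn j Δ)
      (hk : FreshIn k (insert (.at i (b.node α β)) Γ)) (hk' : FreshIn k Δ) :
      Step cut
        [(insert (.at i (α.dia (.nom j)))
            (insert (.at i (β.dia (.nom k)))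
              (insert (b.node (.nom j) (.nom k)) Γ)), Δ)]
        (insert (.at i (b.node α β)) Γ, Δ)
  | cmpR {Γ Δ : Set (Node P N M C)} (i j k : N) (α β : Path P N M C)
      (b : Comparison C) :
      Step cut
        [(insert (.at i (α.dia (.nom j))) (insert (.at i (β.dia (.nom k))) Γ),
          insert (.at i (b.node α β)) (insert (b.node (.nom j) (.nom k)) Δ))]
        (insert (.at i (α.dia (.nom j))) (insert (.at i (β.dia (.nom k))) Γ),
          insert (.at i (b.node α β)) Δ)
  | eqT {Γ Δ : Set (Node P N M C)} (i : N) (c : C) :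
      Step cut [(insert (.eq (.nom i) c (.nom i)) Γ, Δ)] (Γ, Δ)
  | eq5 {Γ Δ : Set (Node P N M C)} (i j k : N) (c : C) :
      Step cut
        [(insert (.eq (.nom j) c (.nom k))
            (insert (.eq (.nom i) c (.nom j)) (insert (.eq (.nom i) c (.nom k)) Γ)), Δ)]
        (insert (.eq (.nom i) c (.nom j)) (insert (.eq (.nom i) c (.nom k)) Γ), Δ)
  | neqL {Γ Δ : Set (Node P N M C)} (i j : N) (c : C) :
      Step cut [(Γ, insert (.eq (.nom i) c (.nom j)) Δ)]
        (insert (.neq (.nom i) c (.nom j)) Γ, Δ)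
  | neqR {Γ Δ : Set (Node P N M C)} (i j : N) (c : C) :
      Step cut [(insert (.eq (.nom i) c (.nom j)) Γ, Δ)]
        (Γ, insert (.neq (.nom i) c (.nom j)) Δ)
  | cutRule {Γ Δ Γ' Δ' : Set (Node P N M C)} (φ : Node P N M C)
      (ha : φ.Admissible) (hc : cut = true) :
      Step cut [(Γ, insert φ Δ), (insert φ Γ', Δ')] (Γ ∪ Γ', Δ ∪ Δ')
  | wl {Γ Δ : Set (Node P N M C)} (φ : Node P N M C) (ha : φ.Admissible) :
      Step cut [(Γ, Δ)] (insert φ Γ, Δ)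
  | wr {Γ Δ : Set (Node P N M C)} (φ : Node P N M C) (ha : φ.Admissible) :
      Step cut [(Γ, Δ)] (Γ, insert φ Δ)

/-- Derivability in G (`Deriv true`) resp. in G without (Cut) (`Deriv false`):
    a derivation built from the rules whose leaves are instances of the
    zero-premiss rules (Ax) or (⊥). -/
inductive Deriv (cut : Bool) : Sequent P N M C → Prop where
  | step {prems : List (Sequent P N M C)} {concl : Sequent P N M C}
      (h : Step cut prems concl) (ih : ∀ s ∈ prems, Deriv cut s) : Deriv cut concl

/-- Γ ⊢_G Δ : the sequent is provable in G. -/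
def ProvableG (Γ Δ : Set (Node P N M C)) : Prop := Deriv true (Γ, Δ)

/-- M ⊩ φ : global satisfaction. -/
def Model.satG (𝔐 : Model P N M C) (φ : Node P N M C) : Prop := ∀ n, 𝔐.sat φ n

/-- Validity of a sequent. -/
def ValidSeq (S : Sequent P N M C) : Prop :=
  ∀ 𝔐 : Model P N M C, (∀ γ ∈ S.1, 𝔐.satG γ) → ∃ δ ∈ S.2, 𝔐.satG δ

/-- Formulas of the basic hybrid logic H(@): no data comparisons. -/
def Node.IsHybrid : Node P N M C → Prop
  | .prop _ => True
  | .nom _ => True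
  | .bot => True
  | .impl φ ψ => φ.IsHybrid ∧ ψ.IsHybrid
  | .at _ φ => φ.IsHybrid
  | .dia _ φ => φ.IsHybrid
  | .eq _ _ _ => False
  | .neq _ _ _ => False

/-!
Soundness is proved rule by rule, by induction on derivations. The formulas of a sequent are
@-formulas and comparisons of nominals, whose truth does not depend on the current node, so
global truth in a model amounts to truth at named nodes. The rules (Nom), (⟨a⟩L) and (⟨▲⟩L)
are handled by reassigning their fresh nominals to the required witnesses: the truth of a
formula depends only on the values of the nominals occurring in it, so the reassignment does
not affect the conclusion. All other rules are sound in each model separately.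
-/

namespace Model

variable (𝔐 : Model P N M C)

def reassign (g' : N → 𝔐.W) : Model P N M C := { 𝔐 with g := g' }

mutual
theorem satPath_reassign {g' : N → 𝔐.W} :
    ∀ {α : Path P N M C}, Set.EqOn g' 𝔐.g α.noms →
      ∀ {n n' : 𝔐.W}, (𝔐.reassign g').satPath α n n' ↔ 𝔐.satPath α n n'
  | .mod _, _, _, _ => Iff.rfl
  | .nom i, h, _, _ => by
      simp only [satPath, reassign, h (Set.mem_singleton i)]
  | .test φ, h, _, _ => and_congr_right' (sat_reassign h)
  | .comp _ _, h, _, _ => by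
      rw [Path.noms, Set.eqOn_union] at h
      exact exists_congr fun _ => and_congr (satPath_reassign h.1) (satPath_reassign h.2)

theorem sat_reassign {g' : N → 𝔐.W} :
    ∀ {φ : Node P N M C}, Set.EqOn g' 𝔐.g φ.noms →
      ∀ {n : 𝔐.W}, (𝔐.reassign g').sat φ n ↔ 𝔐.sat φ n
  | .prop _, _, _ => Iff.rfl
  | .nom i, h, _ => by
      simp only [sat, reassign, h (Set.mem_singleton i)]
  | .bot, _, _ => Iff.rfl
  | .impl _ _, h, _ => by
      rw [Node.noms, Set.eqOn_union] at h
      exact imp_congr (sat_reassign h.1) (sat_reassign h.2)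
  | .at i φ, h, _ => by
      rw [Node.noms, Set.insert_eq, Set.eqOn_union, Set.eqOn_singleton] at h
      show (𝔐.reassign g').sat φ (g' i) ↔ 𝔐.sat φ (𝔐.g i)
      rw [h.1]
      exact sat_reassign h.2
  | .dia _ φ, h, _ => exists_congr fun _ => and_congr_right' (sat_reassign (φ := φ) h)
  | .eq _ _ _, h, _ => by
      rw [Node.noms, Set.eqOn_union] at h
      exact exists₂_congr fun _ _ =>
        and_congr (satPath_reassign h.1) (and_congr_left' (satPath_reassign h.2))
  | .neq _ _ _, h, _ => by
      rw [Node.noms, Set.eqOn_union] at h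
      exact exists₂_congr fun _ _ =>
        and_congr (satPath_reassign h.1) (and_congr_left' (satPath_reassign h.2))
end

theorem satG_reassign {g' : N → 𝔐.W} {φ : Node P N M C} (h : Set.EqOn g' 𝔐.g φ.noms) :
    (𝔐.reassign g').satG φ ↔ 𝔐.satG φ :=
  forall_congr' fun _ => 𝔐.sat_reassign h

theorem sat_pathDia :
    ∀ {α : Path P N M C} {φ : Node P N M C} {n : 𝔐.W},
      𝔐.sat (α.dia φ) n ↔ ∃ n', 𝔐.satPath α n n' ∧ 𝔐.sat φ n'
  | .mod _, _, _ => Iff.rfl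
  | .nom _, _, _ => by simp [Path.dia, sat, satPath]
  | .test _, _, _ => by simp [Path.dia, Node.and, Node.neg, sat, satPath]
  | .comp α β, _, _ => by
      simp only [Path.dia, satPath, sat_pathDia]
      aesop

@[simp]
theorem satG_at {i : N} {φ : Node P N M C} : 𝔐.satG (.at i φ) ↔ 𝔐.sat φ (𝔐.g i) :=
  ⟨fun h => h (𝔐.g i), fun h _ => h⟩

@[simp]
theorem satG_eq_nom {i j : N} {c : C} :
    𝔐.satG (.eq (.nom i) c (.nom j)) ↔ 𝔐.E c (𝔐.g i) (𝔐.g j) := by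
  have := 𝔐.nonempty
  simp [satG, sat, satPath]

@[simp]
theorem satG_neq_nom {i j : N} {c : C} :
    𝔐.satG (.neq (.nom i) c (.nom j)) ↔ ¬ 𝔐.E c (𝔐.g i) (𝔐.g j) := by
  have := 𝔐.nonempty
  simp [satG, sat, satPath]

end Model

def Comparison.Holds (b : Comparison C) (𝔐 : Model P N M C) : 𝔐.W → 𝔐.W → Prop :=
  match b with
  | .ceq c => 𝔐.E c
  | .cneq c => fun w w' => ¬ 𝔐.E c w w'

namespace Comparison

variable (b : Comparison C)

theorem noms_node (α β : Path P N M C) : (b.node α β).noms = α.noms ∪ β.noms := by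
  cases b <;> rfl

theorem sat_node {𝔐 : Model P N M C} {α β : Path P N M C} {n : 𝔐.W} :
    𝔐.sat (b.node α β) n ↔
      ∃ n' n'', 𝔐.satPath α n n' ∧ 𝔐.satPath β n n'' ∧ b.Holds 𝔐 n' n'' := by
  cases b <;> rfl

theorem satG_node_nom {𝔐 : Model P N M C} {j k : N} :
    𝔐.satG (b.node (.nom j) (.nom k)) ↔ b.Holds 𝔐 (𝔐.g j) (𝔐.g k) := by
  have := 𝔐.nonempty
  simp [Model.satG, sat_node, Model.satPath]

theorem holds_reassign {𝔐 : Model P N M C} {g' : N → 𝔐.W} :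
    b.Holds (𝔐.reassign g') = b.Holds 𝔐 := by
  cases b <;> rfl

end Comparison

theorem eqOn_update_of_notMem [DecidableEq N] {W : Type} {g : N → W} {j : N} {w : W} {s : Set N}
    (h : j ∉ s) : Set.EqOn (Function.update g j w) g s :=
  fun _ hx => Function.update_of_ne (ne_of_mem_of_not_mem hx h) _ _

namespace ValidSeq

theorem of_reassign {Γ Γ' Δ : Set (Node P N M C)} (hprem : ValidSeq (Γ', Δ))
    (hwit : ∀ 𝔐 : Model P N M C, (∀ γ ∈ Γ, 𝔐.satG γ) → ∃ g' : N → 𝔐.W,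
      (∀ δ ∈ Δ, Set.EqOn g' 𝔐.g δ.noms) ∧ ∀ γ ∈ Γ', (𝔐.reassign g').satG γ) :
    ValidSeq (Γ, Δ) := by
  intro 𝔐 hΓ
  obtain ⟨g', hΔ, hΓ'⟩ := hwit 𝔐 hΓ
  obtain ⟨δ, hδ, hsat⟩ := hprem _ hΓ'
  exact ⟨δ, hδ, (𝔐.satG_reassign (hΔ δ hδ)).1 hsat⟩

variable {Γ Δ : Set (Node P N M C)}

theorem of_insert_left {φ : Node P N M C} (hprem : ValidSeq (insert φ Γ, Δ))
    (hφ : ∀ 𝔐 : Model P N M C, (∀ γ ∈ Γ, 𝔐.satG γ) → 𝔐.satG φ) : ValidSeq (Γ, Δ) :=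
  fun 𝔐 hΓ => hprem 𝔐 (Set.forall_mem_insert.2 ⟨hφ 𝔐 hΓ, hΓ⟩)

theorem cut {Γ' Δ' : Set (Node P N M C)} {φ : Node P N M C} (h₁ : ValidSeq (Γ, insert φ Δ))
    (h₂ : ValidSeq (insert φ Γ', Δ')) : ValidSeq (Γ ∪ Γ', Δ ∪ Δ') := by
  intro 𝔐 hΓ
  obtain ⟨δ, hδ, hsat⟩ := h₁ 𝔐 fun γ hγ => hΓ γ (Or.inl hγ)
  rcases hδ with rfl | hδ
  · obtain ⟨δ', hδ', hsat'⟩ := h₂ 𝔐 (Set.forall_mem_insert.2 ⟨hsat, fun γ hγ => hΓ γ (Or.inr hγ)⟩)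
    exact ⟨δ', Or.inr hδ', hsat'⟩
  · exact ⟨δ, Or.inl hδ, hsat⟩

variable [DecidableEq N]

theorem nomRule {i j : N} (hprem : ValidSeq (insert (.at i (.nom j)) Γ, Δ))
    (hj : FreshIn j Γ) (hj' : FreshIn j Δ) : ValidSeq (Γ, Δ) := by
  refine hprem.of_reassign fun 𝔐 hΓ => ⟨Function.update 𝔐.g j (𝔐.g i),
    fun δ hδ => eqOn_update_of_notMem (hj' δ hδ), Set.forall_mem_insert.2 ⟨?_,
    fun γ hγ => (𝔐.satG_reassign (eqOn_update_of_notMem (hj γ hγ))).2 (hΓ γ hγ)⟩⟩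
  simp [Model.sat, Model.reassign, Function.update_apply]

theorem diaL {i j : N} {a : M} {φ : Node P N M C}
    (hprem : ValidSeq (insert (.at i (.dia a (.nom j))) (insert (.at j φ) Γ), Δ))
    (hj : FreshIn j (insert (.at i (.dia a φ)) Γ)) (hj' : FreshIn j Δ) :
    ValidSeq (insert (.at i (.dia a φ)) Γ, Δ) := by
  refine hprem.of_reassign fun 𝔐 hΓ => ?_
  obtain ⟨w, hR, hw⟩ := 𝔐.satG_at.1 (hΓ _ (Set.mem_insert _ _))
  have hjp := hj _ (Set.mem_insert _ _)
  simp only [Node.noms, Set.mem_insert_iff, not_or] at hjp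
  refine ⟨Function.update 𝔐.g j w, fun δ hδ => eqOn_update_of_notMem (hj' δ hδ), ?_⟩
  simp only [Set.forall_mem_insert, Model.satG_at]
  refine ⟨?_, ?_, fun γ hγ => (𝔐.satG_reassign (eqOn_update_of_notMem
    (hj γ (Set.mem_insert_of_mem _ hγ)))).2 (hΓ γ (Set.mem_insert_of_mem _ hγ))⟩
  · simpa [Model.sat, Model.reassign, Function.update_of_ne (Ne.symm hjp.1)] using hR
  · simpa [Model.reassign] using (𝔐.sat_reassign (eqOn_update_of_notMem hjp.2)).2 hw

theorem cmpL {i j k : N} {α β : Path P N M C} {b : Comparison C}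
    (hprem : ValidSeq (insert (.at i (α.dia (.nom j)))
      (insert (.at i (β.dia (.nom k))) (insert (b.node (.nom j) (.nom k)) Γ)), Δ))
    (hjk : j ≠ k) (hj : FreshIn j (insert (.at i (b.node α β)) Γ)) (hj' : FreshIn j Δ)
    (hk : FreshIn k (insert (.at i (b.node α β)) Γ)) (hk' : FreshIn k Δ) :
    ValidSeq (insert (.at i (b.node α β)) Γ, Δ) := by
  refine hprem.of_reassign fun 𝔐 hΓ => ?_
  obtain ⟨n₁, n₂, hα, hβ, hb⟩ := b.sat_node.1 (𝔐.satG_at.1 (hΓ _ (Set.mem_insert _ _)))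
  have hjp := hj _ (Set.mem_insert _ _)
  have hkp := hk _ (Set.mem_insert _ _)
  simp only [Node.noms, b.noms_node, Set.mem_insert_iff, Set.mem_union, not_or] at hjp hkp
  set g' := Function.update (Function.update 𝔐.g j n₁) k n₂
  have hg' {s : Set N} (hjs : j ∉ s) (hks : k ∉ s) : Set.EqOn g' 𝔐.g s :=
    (eqOn_update_of_notMem hks).trans (eqOn_update_of_notMem hjs)
  have hi : g' i = 𝔐.g i := by simp [g', Ne.symm hjp.1, Ne.symm hkp.1]
  have hj₁ : g' j = n₁ := by simp [g', hjk]
  have hk₂ : g' k = n₂ := by simp [g']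
  refine ⟨g', fun δ hδ => hg' (hj' δ hδ) (hk' δ hδ), ?_⟩
  simp only [Set.forall_mem_insert, Model.satG_at, Model.sat_pathDia, b.satG_node_nom,
    b.holds_reassign]
  refine ⟨⟨n₁, ?_, hj₁⟩, ⟨n₂, ?_, hk₂⟩, ?_, fun γ hγ => (𝔐.satG_reassign (hg'
    (hj γ (Set.mem_insert_of_mem _ hγ)) (hk γ (Set.mem_insert_of_mem _ hγ)))).2
    (hΓ γ (Set.mem_insert_of_mem _ hγ))⟩
  · change (𝔐.reassign g').satPath α (g' i) n₁
    rw [hi]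
    exact (𝔐.satPath_reassign (hg' hjp.2.1 hkp.2.1)).2 hα
  · change (𝔐.reassign g').satPath β (g' i) n₂
    rw [hi]
    exact (𝔐.satPath_reassign (hg' hjp.2.2 hkp.2.2)).2 hβ
  · change b.Holds 𝔐 (g' j) (g' k)
    rwa [hj₁, hk₂]

end ValidSeq

theorem Step.valid {cut : Bool} {prems : List (Sequent P N M C)} {concl : Sequent P N M C}
    (h : Step cut prems concl) (hprems : ∀ s ∈ prems, ValidSeq s) : ValidSeq concl := by
  classical
  have hhead {s : Sequent P N M C} {l} (hl : ∀ s' ∈ s :: l, ValidSeq s') : ValidSeq s :=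
    hl s List.mem_cons_self
  cases h with
  | nomRule _ _ hj hj' => exact (hhead hprems).nomRule hj hj'
  | diaL _ _ _ _ hj hj' => exact (hhead hprems).diaL hj hj'
  | cmpL _ _ _ _ _ _ hjk hj hj' hk hk' => exact (hhead hprems).cmpL hjk hj hj' hk hk'
  | cutRule _ => exact (hhead hprems).cut (hprems _ (by simp))
  | eqT _ c =>
    exact (hhead hprems).of_insert_left fun 𝔐 _ => 𝔐.satG_eq_nom.2 ((𝔐.E_equiv c).refl _)
  | eq5 _ _ _ c =>
    refine (hhead hprems).of_insert_left fun 𝔐 hΓ => 𝔐.satG_eq_nom.2 ?_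
    have hij := 𝔐.satG_eq_nom.1 (hΓ _ (Set.mem_insert _ _))
    have hik := 𝔐.satG_eq_nom.1 (hΓ _ (Set.mem_insert_of_mem _ (Set.mem_insert _ _)))
    exact (𝔐.E_equiv c).trans ((𝔐.E_equiv c).symm hij) hik
  | _ =>
    -- Each remaining rule is sound in every model separately: once the semantics of its
    -- principal formulas is unfolded, it is a propositional tautology up to equality of nodes.
    intro 𝔐
    replace hprems := fun s hs => hprems s hs 𝔐
    simp only [List.forall_mem_cons, List.not_mem_nil, IsEmpty.forall_iff, implies_true,
      and_true, Set.forall_mem_insert, Set.exists_mem_insert, Model.satG_at, Model.satG_eq_nom,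
      Model.satG_neq_nom, Model.sat, Comparison.satG_node_nom, Comparison.sat_node,
      Model.sat_pathDia] at hprems ⊢
    grind

theorem Deriv.valid {cut : Bool} {s : Sequent P N M C} (h : Deriv cut s) : ValidSeq s := by
  induction h with
  | step hstep _ ih => exact hstep.valid ih

/-- soundness of G. -/
theorem soundness {P N M C : Type} [Countable P] [Infinite P] [Countable N] [Infinite N] [Finite M] [Finite C]
    {Γ Δ : Set (Node P N M C)}
    (hGfin : Γ.Finite) (hDfin : Δ.Finite)
    (hGadm : ∀ ψ ∈ Γ, ψ.Admissible) (hDadm : ∀ ψ ∈ Δ, ψ.Admissible)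
    (h : ProvableG Γ Δ) :
    ∀ 𝔐 : Model P N M C, (∀ γ ∈ Γ, 𝔐.satG γ) → ∃ δ ∈ Δ, 𝔐.satG δ :=
  Deriv.valid h

end HXPathD
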